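/- arXiv:2405.13736 — 5 statements merged into one kernel-verified Lean document; each statement's English description precedes it below -/
import Mathlib

section
/- Let D be a DAG on a finite vertex set V. Then D is essential (i.e., D is the unique DAG on V having the same skeleton and the same set of immoralities as D) if and only if every edge of D is protected. -/
/-- A DAG on a vertex type `V`: an irreflexive relation with no directed cycles
(its transitive closure is irreflexive). -/
def IsDag {V : Type*} (E : V → V → Prop) : Prop :=
  Irreflexive E ∧ Irreflexive (Relation.TransGen E)

/-- The set of parents of `b`. -/
def pa {V : Type*} (E : V → V → Prop) (b : V) : Set V := {a | E a b}

/-- An edge `a → b` is protected if `pa b \ {a} ≠ pa a`. -/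
def IsProtectedEdge {V : Type*} (E : V → V → Prop) (a b : V) : Prop :=
  pa E b \ {a} ≠ pa E a

/-- The skeleton: symmetric closure of the edge relation. -/
def Skeleton {V : Type*} (E : V → V → Prop) (a b : V) : Prop := E a b ∨ E b a

/-- An immorality `(a, b, c)`: `a → b ← c` with `a ≠ c` and `a, c` nonadjacent. -/
def Immorality {V : Type*} (E : V → V → Prop) (a b c : V) : Prop :=
  E a b ∧ E c b ∧ a ≠ c ∧ ¬ Skeleton E a c

/-- A DAG is essential if it is the only DAG on its vertex set with its skeleton
and its immoralities. -/
def Essential {V : Type*} (E : V → V → Prop) : Prop :=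
  ∀ E' : V → V → Prop, IsDag E' →
    (∀ x y, Skeleton E' x y ↔ Skeleton E x y) →
    (∀ x y z, Immorality E' x y z ↔ Immorality E x y z) →
    E' = E

section Aux

variable {V : Type*}

lemma cyc2 {r : V → V → Prop} (h : Irreflexive (Relation.TransGen r)) {x y : V}
    (h1 : r x y) (h2 : r y x) : False :=
  h x ((Relation.TransGen.single h1).tail h2)

lemma cyc3 {r : V → V → Prop} (h : Irreflexive (Relation.TransGen r)) {x y z : V}
    (h1 : r x y) (h2 : r y z) (h3 : r z x) : False :=
  h x (((Relation.TransGen.single h1).tail h2).tail h3)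

/-- rank function : number of strict ancestors. -/
noncomputable def dagRank (E : V → V → Prop) (v : V) : ℕ :=
  Set.ncard {u | Relation.TransGen E u v}

lemma dagRank_lt [Fintype V] {E : V → V → Prop} (hE : IsDag E) {x y : V} (h : E x y) :
    dagRank E x < dagRank E y := by
  apply Set.ncard_lt_ncard _ (Set.toFinite _)
  rw [Set.ssubset_iff_of_subset (fun u hu => hu.tail h)]
  exact ⟨x, Relation.TransGen.single h, fun hx => hE.2 x hx⟩

/-- The relation obtained from `E` by reversing the edge `a → b`. -/
def Erev (E : V → V → Prop) (a b : V) : V → V → Prop :=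
  fun x y => (x = b ∧ y = a) ∨ (E x y ∧ ¬(x = a ∧ y = b))

end Aux

/-- A DAG on a finite vertex set is essential iff every edge is protected. -/
theorem essential_iff_all_protected {V : Type*} [Fintype V]
    (E : V → V → Prop) (hE : IsDag E) :
    Essential E ↔ ∀ a b, E a b → IsProtectedEdge E a b := by
  classical
  constructor
  · -- essential → all edges protected
    intro hEss a b hab
    by_contra hnp
    have hcov : pa E b \ {a} = pa E a := not_not.mp hnp
    have key : ∀ c, (E c b ∧ c ≠ a) ↔ E c a := by
      intro c
      have := Set.ext_iff.mp hcov c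
      simpa [pa, Set.mem_diff, Set.mem_setOf_eq] using this
    have hne : a ≠ b := fun h => hE.1 a (h ▸ hab)
    set E' := Erev E a b with hE'def
    -- E₀ : E with the edge a→b removed
    set E₀ : V → V → Prop := fun x y => E x y ∧ ¬(x = a ∧ y = b) with hE₀def
    have hE₀sub : ∀ ⦃x y⦄, E₀ x y → E x y := fun x y h => h.1
    -- no E₀-path from a to b
    have noPath : ¬ Relation.TransGen E₀ a b := by
      intro h
      obtain ⟨c, hac, hcb⟩ := Relation.TransGen.tail'_iff.mp h
      have hca : c ≠ a := fun h' => hcb.2 ⟨h', rfl⟩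
      have hEca : E c a := (key c).mp ⟨hcb.1, hca⟩
      have : Relation.TransGen E a a :=
        Relation.TransGen.tail' (Relation.ReflTransGen.mono hE₀sub _ _ hac) hEca
      exact hE.2 a this
    -- dichotomy for paths in E'
    have dich : ∀ x y, Relation.TransGen E' x y →
        Relation.TransGen E₀ x y ∨
        (Relation.ReflTransGen E₀ x b ∧ Relation.ReflTransGen E₀ a y) := by
      intro x y h
      induction h with
      | single h =>
        rcases h with ⟨rfl, rfl⟩ | h
        · exact Or.inr ⟨Relation.ReflTransGen.refl, Relation.ReflTransGen.refl⟩
        · exact Or.inl (Relation.TransGen.single h)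
      | tail _ h2 ih =>
        rcases h2 with ⟨rfl, rfl⟩ | h2
        · rcases ih with ih | ⟨ih1, _⟩
          · exact Or.inr ⟨ih.to_reflTransGen, Relation.ReflTransGen.refl⟩
          · exact Or.inr ⟨ih1, Relation.ReflTransGen.refl⟩
        · rcases ih with ih | ⟨ih1, ih2⟩
          · exact Or.inl (ih.tail h2)
          · exact Or.inr ⟨ih1, ih2.tail h2⟩
    have hE'dag : IsDag E' := by
      constructor
      · intro x hx
        rcases hx with ⟨rfl, h⟩ | ⟨h, _⟩
        · exact hne h.symm
        · exact hE.1 x h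
      · intro x hx
        rcases dich x x hx with h | ⟨h1, h2⟩
        · exact hE.2 x (Relation.TransGen.mono hE₀sub _ _ h)
        · have hab' : Relation.ReflTransGen E₀ a b := h2.trans h1
          rcases Relation.reflTransGen_iff_eq_or_transGen.mp hab' with h | h
          · exact hne h.symm
          · exact noPath h
    have hskel : ∀ x y, Skeleton E' x y ↔ Skeleton E x y := by
      intro x y
      constructor
      · rintro ((⟨rfl, rfl⟩ | ⟨h, _⟩) | (⟨rfl, rfl⟩ | ⟨h, _⟩))
        · exact Or.inr hab
        · exact Or.inl h
        · exact Or.inl hab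
        · exact Or.inr h
      · rintro (h | h)
        · by_cases hc : x = a ∧ y = b
          · exact Or.inr (Or.inl ⟨hc.2, hc.1⟩)
          · exact Or.inl (Or.inr ⟨h, hc⟩)
        · by_cases hc : y = a ∧ x = b
          · exact Or.inl (Or.inl ⟨hc.2, hc.1⟩)
          · exact Or.inr (Or.inr ⟨h, hc⟩)
    have himm : ∀ x y z, Immorality E' x y z ↔ Immorality E x y z := by
      intro x y z
      constructor
      · rintro ⟨hxy, hzy, hxz, hnadj⟩
        have hnadj' : ¬ Skeleton E x z := fun h => hnadj ((hskel x z).mpr h)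
        rcases hxy with ⟨rfl, rfl⟩ | ⟨hxy, _⟩
        · -- x = b, y = a : z → a in E', z ≠ b, so E z a hence E z b : adjacency
          rcases hzy with ⟨rfl, _⟩ | ⟨hza, hzc⟩
          · exact absurd rfl hxz
          · have hza' : E z x := ((key z).mpr hza).1
            exact absurd (Or.inr hza') hnadj'
        · rcases hzy with ⟨rfl, rfl⟩ | ⟨hzy, _⟩
          · have hxa' : E x z := ((key x).mpr hxy).1
            exact absurd (Or.inl hxa') hnadj'
          · exact ⟨hxy, hzy, hxz, hnadj'⟩
      · rintro ⟨hxy, hzy, hxz, hnadj⟩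
        have hnadj' : ¬ Skeleton E' x z := fun h => hnadj ((hskel x z).mp h)
        have hx' : ¬(x = a ∧ y = b) := by
          rintro ⟨rfl, rfl⟩
          have hz : z ≠ x := fun h => hxz (h.symm)
          exact hnadj (Or.inr ((key z).mp ⟨hzy, hz⟩))
        have hz' : ¬(z = a ∧ y = b) := by
          rintro ⟨rfl, rfl⟩
          have hx : x ≠ z := hxz
          exact hnadj (Or.inl ((key x).mp ⟨hxy, hx⟩))
        exact ⟨Or.inr ⟨hxy, hx'⟩, Or.inr ⟨hzy, hz'⟩, hxz, hnadj'⟩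
    have heq := hEss E' hE'dag hskel himm
    have : E' a b := heq ▸ hab
    rcases this with ⟨h, _⟩ | ⟨_, h⟩
    · exact hne h
    · exact h ⟨rfl, rfl⟩
  · -- all edges protected → essential
    intro hprot E' hE' hskel himm
    set R : Set (V × V) := {p | E p.1 p.2 ∧ E' p.2 p.1} with hRdef
    have hRempty : R = ∅ := by
      by_contra hne
      have hRne : R.Nonempty := Set.nonempty_iff_ne_empty.mpr hne
      set f : V → ℕ := dagRank E with hfdef
      obtain ⟨p0, hp0R, hp0min⟩ :=
        Set.exists_min_image R (fun p => f p.2) (Set.toFinite _) hRne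
      set y := p0.2 with hydef
      set S : Set (V × V) := {p ∈ R | p.2 = y} with hSdef
      have hSne : S.Nonempty := ⟨p0, hp0R, rfl⟩
      obtain ⟨p1, hp1S, hp1max⟩ :=
        Set.exists_max_image S (fun p => f p.1) (Set.toFinite _) hSne
      set x := p1.1 with hxdef
      have hp1y : p1.2 = y := hp1S.2
      have hxyE : E x y := hp1y ▸ hp1S.1.1
      have hyxE' : E' y x := hp1y ▸ hp1S.1.2
      have hminy : ∀ p ∈ R, f y ≤ f p.2 := hp0min
      have hmaxx : ∀ p ∈ R, p.2 = y → f p.1 ≤ f x := fun p hp hpy => hp1max p ⟨hp, hpy⟩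
      -- show x → y is unprotected, contradiction
      apply hprot x y hxyE
      ext w
      simp only [pa, Set.mem_diff, Set.mem_setOf_eq, Set.mem_singleton_iff]
      constructor
      · -- E w y ∧ w ≠ x → E w x
        rintro ⟨hwy, hwx⟩
        have hwny : w ≠ y := fun h => hE.1 w (h ▸ hwy)
        -- w adjacent to x
        have hadj : Skeleton E w x := by
          by_contra hnadj
          have himE : Immorality E w y x := ⟨hwy, hxyE, hwx, hnadj⟩
          have himE' : Immorality E' w y x := (himm w y x).mpr himE
          exact cyc2 hE'.2 himE'.2.1 hyxE'
        rcases hadj with hwxE | hxwE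
        · exact hwxE
        · -- E x w : derive contradiction
          exfalso
          have hfxw : f x < f w := dagRank_lt hE hxwE
          have hskelwy : Skeleton E' w y := (hskel w y).mpr (Or.inl hwy)
          rcases hskelwy with hwyE' | hywE'
          · -- E' w y : then E' w x (else 3-cycle), so (x,w) ∈ R with head w, f y ≤ f w < f y
            have hskelxw : Skeleton E' x w := (hskel x w).mpr (Or.inl hxwE)
            have hwxE' : E' w x := by
              rcases hskelxw with h | h
              · exact (cyc3 hE'.2 h hwyE' hyxE').elim
              · exact h
            have hxwR : (x, w) ∈ R := ⟨hxwE, hwxE'⟩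
            have h1 : f y ≤ f w := hminy (x, w) hxwR
            have hfwy : f w < f y := dagRank_lt hE hwy
            omega
          · -- E' y w : (w,y) ∈ R with head y, so f w ≤ f x, contradiction
            have hwyR : (w, y) ∈ R := ⟨hwy, hywE'⟩
            have h1 : f w ≤ f x := hmaxx (w, y) hwyR rfl
            omega
      · -- E w x → E w y ∧ w ≠ x
        intro hwx
        have hwnx : w ≠ x := fun h => hE.1 w (h ▸ hwx)
        refine ⟨?_, hwnx⟩
        have hwny : w ≠ y := by
          rintro rfl
          exact cyc2 hE.2 hwx hxyE
        -- w adjacent to y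
        have hadj : Skeleton E w y := by
          by_contra hnadj
          have hnadj' : ¬ Skeleton E' w y := fun h => hnadj ((hskel w y).mp h)
          have hskelwx : Skeleton E' w x := (hskel w x).mpr (Or.inl hwx)
          rcases hskelwx with hwxE' | hxwE'
          · -- immorality (w, x, y) in E' : w→x ← y, w ≠ y nonadjacent
            have himE' : Immorality E' w x y := ⟨hwxE', hyxE', hwny, hnadj'⟩
            have himE : Immorality E w x y := (himm w x y).mp himE'
            exact cyc2 hE.2 hxyE himE.2.1
          · -- (w, x) ∈ R with head x, f x < f y contradicts minimality of f y
            have hwxR : (w, x) ∈ R := ⟨hwx, hxwE'⟩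
            have h1 : f y ≤ f x := hminy (w, x) hwxR
            have h2 : f x < f y := dagRank_lt hE hxyE
            omega
        rcases hadj with h | h
        · exact h
        · exact (cyc3 hE.2 h hwx hxyE).elim
    -- from R = ∅ conclude E' = E
    funext u v
    have hR : ∀ s t, ¬ (E s t ∧ E' t s) := by
      intro s t hst
      have : (s, t) ∈ R := hst
      rw [hRempty] at this
      exact this
    apply propext
    constructor
    · intro h
      rcases (hskel u v).mp (Or.inl h) with h' | h'
      · exact h'
      · exact absurd ⟨h', h⟩ (hR v u)
    · intro h
      rcases (hskel u v).mpr (Or.inl h) with h' | h'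
      · exact h'
      · exact absurd ⟨h, h'⟩ (hR u v)
end

section
/- Let D be a DAG on a finite vertex set V and let a→b be an edge of D that is not protected, i.e., pa(b) = pa(a) ∪ {a}. Then the relation D' obtained from D by deleting the edge a→b and adding the edge b→a is again a DAG, and D' has the same skeleton and the same set of immoralities as D; in particular, D is not essential. -/
/-- Reversing an unprotected edge `a → b` (one with `pa b = pa a ∪ {a}`) produces
a DAG with the same skeleton and the same immoralities; in particular the original
DAG is not essential. -/
theorem reverse_unprotected_edge {V : Type*} [Fintype V]
    (E : V → V → Prop) (hE : IsDag E) (a b : V) (hab : E a b)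
    (hnp : pa E b = pa E a ∪ {a})
    (E' : V → V → Prop)
    (hE' : ∀ x y, E' x y ↔ ((E x y ∧ ¬(x = a ∧ y = b)) ∨ (x = b ∧ y = a))) :
    IsDag E' ∧
      (∀ x y, Skeleton E' x y ↔ Skeleton E x y) ∧
      (∀ x y z, Immorality E' x y z ↔ Immorality E x y z) ∧
      ¬ Essential E := by
  obtain ⟨hirr, hacyc⟩ := hE
  have hnab : a ≠ b := fun h => hirr a (h ▸ hab)
  have hmem : ∀ x, E x b ↔ (E x a ∨ x = a) := by
    intro x
    have := Set.ext_iff.mp hnp x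
    simpa [pa, Set.mem_union, or_comm] using this
  set s : V → V → Prop := fun x y => E x y ∧ ¬(x = a ∧ y = b) with hs
  have hsE : ∀ {x y}, s x y → E x y := fun h => h.1
  -- no s-path from a to b
  have hnos : ¬ Relation.TransGen s a b := by
    intro h
    obtain ⟨x, hax, hxb⟩ := Relation.TransGen.tail'_iff.mp h
    have hxa : x ≠ a := fun hx => hxb.2 ⟨hx, rfl⟩
    have hxa' : E x a := (hmem x).mp hxb.1 |>.resolve_right hxa
    have : Relation.ReflTransGen E a x := Relation.ReflTransGen.mono (r := s) (p := E) (fun _ _ => hsE) _ _ hax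
    exact hacyc a (Relation.TransGen.tail' this hxa')
  -- prefix lemma
  have prefixl : ∀ x y, Relation.TransGen E' x y →
      Relation.TransGen s x y ∨ Relation.ReflTransGen s x b := by
    intro x y h
    induction h using Relation.TransGen.head_induction_on with
    | single h =>
      rcases (hE' _ _).mp h with h | ⟨rfl, rfl⟩
      · exact Or.inl (Relation.TransGen.single h)
      · exact Or.inr Relation.ReflTransGen.refl
    | head h' _ ihc =>
      rcases (hE' _ _).mp h' with h' | ⟨rfl, rfl⟩
      · rcases ihc with ih | ih
        · exact Or.inl (ih.head h')
        · exact Or.inr (ih.head h')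
      · exact Or.inr Relation.ReflTransGen.refl
  -- suffix lemma
  have suffixl : ∀ x y, Relation.TransGen E' x y →
      Relation.TransGen s x y ∨ Relation.ReflTransGen E' a y := by
    intro x y h
    induction h with
    | single h =>
      rcases (hE' _ _).mp h with h | ⟨rfl, rfl⟩
      · exact Or.inl (Relation.TransGen.single h)
      · exact Or.inr Relation.ReflTransGen.refl
    | tail _ h2 ih =>
      rcases (hE' _ _).mp h2 with h2 | ⟨rfl, rfl⟩
      · rcases ih with ih | ih
        · exact Or.inl (ih.tail h2)
        · exact Or.inr (ih.tail ((hE' _ _).mpr (Or.inl h2)))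
      · exact Or.inr Relation.ReflTransGen.refl
  have hsTE : ∀ {x y}, Relation.TransGen s x y → Relation.TransGen E x y :=
    fun h => Relation.TransGen.mono (r := s) (p := E) (fun _ _ => hsE) _ _ h
  have hacyc' : Irreflexive (Relation.TransGen E') := by
    intro c hc
    rcases suffixl c c hc with h1 | h1
    · exact hacyc c (hsTE h1)
    rcases prefixl c c hc with h2 | h2
    · exact hacyc c (hsTE h2)
    have h2' : Relation.ReflTransGen E' c b :=
      Relation.ReflTransGen.mono (r := s) (p := E') (fun _ _ h => (hE' _ _).mpr (Or.inl h)) _ _ h2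
    have hab' : Relation.TransGen E' a b := by
      rcases Relation.reflTransGen_iff_eq_or_transGen.mp (h1.trans h2') with h | h
      · exact absurd h.symm hnab
      · exact h
    rcases prefixl a b hab' with h3 | h3
    · exact hnos h3
    · rcases Relation.reflTransGen_iff_eq_or_transGen.mp h3 with h | h
      · exact hnab h.symm
      · exact hnos h
  have hirr' : Irreflexive E' := by
    intro x h
    rcases (hE' _ _).mp h with h | ⟨h1, h2⟩
    · exact hirr x h.1
    · exact hnab (h2 ▸ h1)
  have hdag' : IsDag E' := ⟨hirr', hacyc'⟩
  have hskel : ∀ x y, Skeleton E' x y ↔ Skeleton E x y := by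
    intro x y
    simp only [Skeleton, hE']
    constructor
    · rintro ((⟨h, -⟩ | ⟨rfl, rfl⟩) | (⟨h, -⟩ | ⟨rfl, rfl⟩))
      · exact Or.inl h
      · exact Or.inr hab
      · exact Or.inr h
      · exact Or.inl hab
    · rintro (h | h)
      · by_cases hx : x = a ∧ y = b
        · exact Or.inr (Or.inr ⟨hx.2, hx.1⟩)
        · exact Or.inl (Or.inl ⟨h, hx⟩)
      · by_cases hy : y = a ∧ x = b
        · exact Or.inl (Or.inr ⟨hy.2, hy.1⟩)
        · exact Or.inr (Or.inl ⟨h, hy⟩)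
  have himm : ∀ x y z, Immorality E' x y z ↔ Immorality E x y z := by
    intro x y z
    simp only [Immorality, hskel x z]
    constructor
    · rintro ⟨h1, h2, hxz, hns⟩
      refine ⟨?_, ?_, hxz, hns⟩
      · rcases (hE' _ _).mp h1 with ⟨h1, -⟩ | ⟨rfl, rfl⟩
        · exact h1
        · rcases (hE' _ _).mp h2 with ⟨h2, -⟩ | ⟨hz, -⟩
          · exact absurd (Or.inr ((hmem z).mpr (Or.inl h2))) hns
          · exact absurd hz.symm hxz
      · rcases (hE' _ _).mp h2 with ⟨h2, -⟩ | ⟨rfl, rfl⟩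
        · exact h2
        · rcases (hE' _ _).mp h1 with ⟨h1, -⟩ | ⟨hx, -⟩
          · exact absurd (Or.inl ((hmem x).mpr (Or.inl h1))) hns
          · exact absurd hx hxz
    · rintro ⟨h1, h2, hxz, hns⟩
      refine ⟨?_, ?_, hxz, hns⟩
      · rw [hE']
        by_cases hx : x = a ∧ y = b
        · obtain ⟨rfl, rfl⟩ := hx
          rcases (hmem z).mp h2 with hz | rfl
          · exact absurd (Or.inr hz) hns
          · exact absurd rfl hxz
        · exact Or.inl ⟨h1, hx⟩
      · rw [hE']
        by_cases hz : z = a ∧ y = b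
        · obtain ⟨rfl, rfl⟩ := hz
          rcases (hmem x).mp h1 with hx | rfl
          · exact absurd (Or.inl hx) hns
          · exact absurd rfl hxz
        · exact Or.inl ⟨h2, hz⟩
  refine ⟨hdag', hskel, himm, fun hess => ?_⟩
  have heq := hess E' hdag' hskel himm
  have : E' a b := heq ▸ hab
  rcases (hE' _ _).mp this with ⟨-, h⟩ | ⟨h, -⟩
  · exact h ⟨rfl, rfl⟩
  · exact hnab h
end

section
/- Let D be a DAG on a finite vertex set V in which every edge is protected, let s ∉ V be a new vertex, and let P ⊆ V. Let D' be the graph on V ∪ {s} obtained from D by adding an edge v→s for every v ∈ P and no other edges. Then D' is a DAG in which s is a sink, and every edge of D' is protected if and only if P ≠ {v} ∪ pa(v) for every v ∈ V (where pa is taken in D). -/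
theorem Set.sdiff_singleton_eq_iff_eq_insert {α : Type*} {s t : Set α} {a : α}
    (has : a ∈ s) (hat : a ∉ t) : s \ {a} = t ↔ s = insert a t := by
  constructor
  · rintro rfl
    exact (Set.insert_sdiff_self_of_mem has).symm
  · rintro rfl
    exact Set.insert_sdiff_self_of_notMem hat

section AddSink

variable {V : Type*} (E : V → V → Prop) (P : Set V)

def addSink : Option V → Option V → Prop
  | some v, some w => E v w
  | some v, none => v ∈ P
  | none, _ => False

variable {E P}

theorem eq_addSink {E' : Option V → Option V → Prop}
    (h1 : ∀ v w : V, E' (some v) (some w) ↔ E v w)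
    (h2 : ∀ v : V, E' (some v) none ↔ v ∈ P)
    (h3 : ∀ y : Option V, ¬ E' none y) : E' = addSink E P := by
  ext (_ | v) (_ | w)
  exacts [iff_of_false (h3 _) id, iff_of_false (h3 _) id, h2 v, h1 v w]

theorem not_transGen_addSink_none (y : Option V) :
    ¬ Relation.TransGen (addSink E P) none y := by
  intro h
  induction h with
  | single h => exact h
  | tail _ _ ih => exact ih

theorem transGen_addSink_some {v w : V}
    (h : Relation.TransGen (addSink E P) (some v) (some w)) : Relation.TransGen E v w := by
  generalize hy : some w = y at h
  induction h generalizing w with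
  | single hvw => subst hy; exact .single hvw
  | @tail u _ _ huw ih =>
    subst hy
    rcases u with _ | u
    exacts [huw.elim, (ih rfl).tail huw]

theorem isDag_addSink (hE : IsDag E) : IsDag (addSink E P) := by
  constructor
  · rintro (_ | v)
    exacts [id, hE.1 v]
  · rintro (_ | v) h
    exacts [not_transGen_addSink_none _ h, hE.2 v (transGen_addSink_some h)]

theorem pa_addSink (b : Option V) : pa (addSink E P) b = some '' b.elim P (pa E) := by
  ext (_ | a) <;> cases b <;> simp [pa, addSink]

theorem isProtectedEdge_addSink_some_iff (a : V) (b : Option V) :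
    IsProtectedEdge (addSink E P) (some a) b ↔ b.elim P (pa E) \ {a} ≠ pa E a := by
  rw [IsProtectedEdge, pa_addSink, pa_addSink, ← Set.image_singleton,
    ← Set.image_sdiff (Option.some_injective V), (Option.some_injective V).image_injective.ne_iff]
  rfl

theorem isProtectedEdge_addSink_some_none_iff {v : V} (hv : v ∉ pa E v) (hvP : v ∈ P) :
    IsProtectedEdge (addSink E P) (some v) none ↔ P ≠ insert v (pa E v) :=
  (isProtectedEdge_addSink_some_iff v none).trans
    (Set.sdiff_singleton_eq_iff_eq_insert hvP hv).not

end AddSink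

theorem add_sink_protected_general {V : Type*}
    (E : V → V → Prop) (hE : IsDag E)
    (hp : ∀ a b, E a b → IsProtectedEdge E a b)
    (P : Set V)
    (E' : Option V → Option V → Prop)
    (h1 : ∀ v w : V, E' (some v) (some w) ↔ E v w)
    (h2 : ∀ v : V, E' (some v) none ↔ v ∈ P)
    (h3 : ∀ y : Option V, ¬ E' none y) :
    IsDag E' ∧ (∀ y : Option V, ¬ E' none y) ∧
      ((∀ a b : Option V, E' a b → IsProtectedEdge E' a b) ↔
        ∀ v : V, P ≠ insert v (pa E v)) := by
  obtain rfl := eq_addSink h1 h2 h3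
  refine ⟨isDag_addSink hE, h3, ?_, ?_⟩
  · intro hprot v hPv
    have hvP : v ∈ P := hPv ▸ Set.mem_insert v _
    exact (isProtectedEdge_addSink_some_none_iff (hE.1 v) hvP).1 (hprot _ _ hvP) hPv
  · rintro hP (_ | a) (_ | b) hab
    · exact hab.elim
    · exact hab.elim
    · exact (isProtectedEdge_addSink_some_none_iff (hE.1 a) hab).2 (hP a)
    · exact (isProtectedEdge_addSink_some_iff a (some b)).2 (hp a b hab)

/-- Adding a new sink `s` (modelled as `none : Option V`) with parent set `P ⊆ V`
to a DAG all of whose edges are protected yields a DAG in which `s` is a sink, and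
every edge of the new graph is protected iff `P ≠ {v} ∪ pa(v)` for every `v ∈ V`. -/
theorem add_sink_protected {V : Type*} [Fintype V]
    (E : V → V → Prop) (hE : IsDag E)
    (hp : ∀ a b, E a b → IsProtectedEdge E a b)
    (P : Set V)
    (E' : Option V → Option V → Prop)
    (h1 : ∀ v w : V, E' (some v) (some w) ↔ E v w)
    (h2 : ∀ v : V, E' (some v) none ↔ v ∈ P)
    (h3 : ∀ y : Option V, ¬ E' none y) :
    IsDag E' ∧ (∀ y : Option V, ¬ E' none y) ∧
      ((∀ a b : Option V, E' a b → IsProtectedEdge E' a b) ↔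
        ∀ v : V, P ≠ insert v (pa E v)) :=
  add_sink_protected_general E hE hp P E' h1 h2 h3
end

section
/- Fix integers 1 ≤ m ≤ n. The number of DAGs on vertex set {1,…,n} in which every edge is protected and each of the vertices 1,…,m is a sink equals (2^{n−m} − (n−m))^m · a_{n−m}, where a_{n−m} is the number of DAGs on an (n−m)-element labeled vertex set in which every edge is protected. -/
/-- `essentialCount k` is the number of DAGs on the labeled vertex set `Fin k`
in which every edge is protected (the number of essential DAGs on `k` nodes). -/
noncomputable def essentialCount (k : ℕ) : ℕ :=
  Nat.card {E : Fin k → Fin k → Bool //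
    IsDag (fun a b => E a b = true) ∧
    ∀ a b : Fin k, E a b = true → IsProtectedEdge (fun x y => E x y = true) a b}

open Relation Sum

@[simp] theorem mem_pa {V : Type*} (E : V → V → Prop) (a b : V) :
    a ∈ pa E b ↔ E a b := Iff.rfl

section Comp
variable {V W : Type*} (e : V ≃ W) (E : W → W → Prop)

theorem transGen_comp (a b : V) :
    TransGen (fun x y => E (e x) (e y)) a b ↔ TransGen E (e a) (e b) := by
  constructor
  · exact TransGen.lift e (fun _ _ h => h) _ _
  · intro h
    have := TransGen.lift (p := fun x y => E (e x) (e y)) e.symm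
      (fun x y hxy => by simpa [Function.onFun] using hxy) _ _ h
    simpa [Function.onFun] using this

theorem isDag_comp : IsDag (fun a b => E (e a) (e b)) ↔ IsDag E := by
  constructor
  · rintro ⟨h1, h2⟩
    refine ⟨fun x hx => h1 (e.symm x) (by simpa using hx),
            fun x hx => h2 (e.symm x) ?_⟩
    rw [transGen_comp]; simpa using hx
  · rintro ⟨h1, h2⟩
    exact ⟨fun x hx => h1 (e x) hx, fun x hx => h2 (e x) ((transGen_comp e E x x).mp hx)⟩

theorem pa_comp (b : V) : pa (fun x y => E (e x) (e y)) b = e ⁻¹' pa E (e b) := rfl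

theorem protected_comp (a b : V) :
    IsProtectedEdge (fun x y => E (e x) (e y)) a b ↔ IsProtectedEdge E (e a) (e b) := by
  unfold IsProtectedEdge
  have hd : pa (fun x y => E (e x) (e y)) b \ {a} = e ⁻¹' (pa E (e b) \ {e a}) := by
    rw [pa_comp, Set.preimage_diff]
    congr 1
    ext x
    simp
  rw [hd, pa_comp]
  exact not_congr (Set.preimage_eq_preimage e.surjective)

end Comp

section Glue
variable {m k : ℕ}

/-- Glue an inner relation `E'` on `Fin k` with parent sets `P i` for `m` sinks. -/
def glue (E' : Fin k → Fin k → Bool) (P : Fin m → Fin k → Bool) :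
    (Fin m ⊕ Fin k) → (Fin m ⊕ Fin k) → Bool
  | Sum.inr a, Sum.inr b => E' a b
  | Sum.inr a, Sum.inl i => P i a
  | Sum.inl _, _ => false

/-- A parent set `S` is good with respect to the inner DAG `E'`. -/
def GoodP (E' : Fin k → Fin k → Bool) (S : Fin k → Bool) : Prop :=
  ∀ a, S a = true → {x | S x = true} \ {a} ≠ pa (fun x y => E' x y = true) a

variable (E' : Fin k → Fin k → Bool) (P : Fin m → Fin k → Bool)

@[simp] theorem glue_inl (i : Fin m) (y : Fin m ⊕ Fin k) : glue E' P (inl i) y = false := by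
  cases y <;> rfl

@[simp] theorem glue_rr (a b : Fin k) : glue E' P (inr a) (inr b) = E' a b := rfl

@[simp] theorem glue_rl (a : Fin k) (i : Fin m) : glue E' P (inr a) (inl i) = P i a := rfl

theorem glue_tg_src {x y : Fin m ⊕ Fin k}
    (h : TransGen (fun u v => glue E' P u v = true) x y) : ∃ a, x = inr a := by
  induction h with
  | single h => cases x with
    | inl i => simp at h
    | inr a => exact ⟨a, rfl⟩
  | tail _ _ ih => exact ih

theorem glue_tg_restrict {x y : Fin m ⊕ Fin k}
    (h : TransGen (fun u v => glue E' P u v = true) x y) :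
    ∀ a b, x = inr a → y = inr b → TransGen (fun u v => E' u v = true) a b := by
  induction h with
  | single h =>
    rintro a b rfl rfl
    exact TransGen.single (by simpa using h)
  | @tail y z hxy hyz ih =>
    rintro a b rfl rfl
    cases y with
    | inl i =>
      obtain ⟨c, hc⟩ := glue_tg_src E' P (TransGen.single hyz)
      simp at hc
    | inr c => exact (ih a c rfl rfl).tail (by simpa using hyz)

theorem glue_isDag (hE : IsDag (fun a b => E' a b = true)) :
    IsDag (fun u v => glue E' P u v = true) := by
  constructor
  · rintro (i | a) h
    · simp at h
    · exact hE.1 a (by simpa using h)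
  · intro x hx
    obtain ⟨a, rfl⟩ := glue_tg_src E' P hx
    exact hE.2 a (glue_tg_restrict E' P hx a a rfl rfl)

theorem glue_protected_rr {a b : Fin k}
    (hp : IsProtectedEdge (fun x y => E' x y = true) a b) :
    IsProtectedEdge (fun u v => glue E' P u v = true) (inr a) (inr b) := by
  intro hcon
  apply hp
  ext c
  have := Set.ext_iff.mp hcon (inr c)
  simpa [Sum.inr.injEq] using this

theorem glue_protected_rl {a : Fin k} {i : Fin m}
    (hg : GoodP E' (P i)) (ha : P i a = true) :
    IsProtectedEdge (fun u v => glue E' P u v = true) (inr a) (inl i) := by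
  intro hcon
  apply hg a ha
  ext c
  have := Set.ext_iff.mp hcon (inr c)
  simpa [Sum.inr.injEq] using this

variable (F : (Fin m ⊕ Fin k) → (Fin m ⊕ Fin k) → Bool)

theorem proj_isDag (hd : IsDag (fun u v => F u v = true)) :
    IsDag (fun a b : Fin k => F (inr a) (inr b) = true) := by
  refine ⟨fun a h => hd.1 (inr a) h, fun a h => hd.2 (inr a) ?_⟩
  exact TransGen.lift inr (fun _ _ h => h) _ _ h

theorem proj_protected (hs : ∀ (i : Fin m) y, F (inl i) y = false) {a b : Fin k}
    (hp : IsProtectedEdge (fun u v => F u v = true) (inr a) (inr b)) :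
    IsProtectedEdge (fun x y : Fin k => F (inr x) (inr y) = true) a b := by
  intro hcon
  apply hp
  ext x
  cases x with
  | inl j => simp [hs]
  | inr c =>
    have := Set.ext_iff.mp hcon c
    simpa [Sum.inr.injEq] using this

theorem proj_good (hs : ∀ (i : Fin m) y, F (inl i) y = false) {a : Fin k} {i : Fin m}
    (hp : IsProtectedEdge (fun u v => F u v = true) (inr a) (inl i))
    (hcon : {x | F (inr x) (inl i) = true} \ {a}
      = pa (fun x y : Fin k => F (inr x) (inr y) = true) a) :
    False := by
  apply hp
  ext x
  cases x with
  | inl j => simp [hs]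
  | inr c =>
    have := Set.ext_iff.mp hcon c
    simpa [Sum.inr.injEq] using this

end Glue

section CardGood
variable {k : ℕ} (E' : Fin k → Fin k → Bool)

/-- The bad parent sets: `pa a ∪ {a}` for a vertex `a`. -/
def badFun (a : Fin k) : Fin k → Bool := fun x => E' x a || decide (x = a)

theorem badFun_inj (hd : IsDag (fun a b => E' a b = true)) :
    Function.Injective (badFun E') := by
  intro a b hab
  by_contra hne
  have ha := congrFun hab a
  have hbb := congrFun hab b
  simp only [badFun] at ha hbb
  simp [hne] at ha
  simp [Ne.symm hne] at hbb
  exact hd.2 a ((TransGen.single (a := a) (b := b) ha).tail hbb)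

theorem good_iff_not_bad (hd : IsDag (fun a b => E' a b = true)) (S : Fin k → Bool) :
    GoodP E' S ↔ ¬ ∃ a, S = badFun E' a := by
  constructor
  · rintro hg ⟨a, rfl⟩
    apply hg a (by simp [badFun])
    ext x
    by_cases h : x = a
    · subst h
      simp [badFun, Bool.eq_false_iff.mpr (hd.1 x)]
    · simp [badFun, h]
  · intro hb a ha hcon
    apply hb
    refine ⟨a, funext fun x => ?_⟩
    by_cases h : x = a
    · subst h
      simp [badFun, ha]
    · have hx := Set.ext_iff.mp hcon x
      simp [h, mem_pa] at hx
      simp [badFun, h]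
      cases hS : S x with
      | true => simp [hS] at hx; simp [hx]
      | false =>
        simp [hS] at hx
        exact hx.symm

theorem card_good (hd : IsDag (fun a b => E' a b = true)) :
    Nat.card {S : Fin k → Bool // GoodP E' S} = 2 ^ k - k := by
  classical
  have e1 : {S : Fin k → Bool // GoodP E' S} ≃ {S : Fin k → Bool // ¬ ∃ a, S = badFun E' a} :=
    Equiv.subtypeEquivRight (good_iff_not_bad E' hd)
  have e2 : Fin k ≃ {S : Fin k → Bool // ∃ a, S = badFun E' a} :=
    (Equiv.ofInjective _ (badFun_inj E' hd)).trans
      (Equiv.subtypeEquivRight (fun S => by simp [Set.range, eq_comm]))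
  rw [Nat.card_congr e1, Nat.card_eq_fintype_card, Fintype.card_subtype_compl]
  have h2 : Fintype.card {S : Fin k → Bool // ∃ a, S = badFun E' a} = k := by
    rw [← Fintype.card_congr e2, Fintype.card_fin]
  rw [h2]
  congr 1
  simp

end CardGood

section MainEquiv
variable {m k : ℕ}

/-- The type of essential DAGs on `Fin k`. -/
def Ess (k : ℕ) := {E : Fin k → Fin k → Bool //
    IsDag (fun a b => E a b = true) ∧
    ∀ a b : Fin k, E a b = true → IsProtectedEdge (fun x y => E x y = true) a b}

/-- Decomposition of essential DAGs on `Fin m ⊕ Fin k` with all `inl` vertices sinks. -/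
noncomputable def sumEquiv (m k : ℕ) :
    {F : (Fin m ⊕ Fin k) → (Fin m ⊕ Fin k) → Bool //
        IsDag (fun u v => F u v = true) ∧
        (∀ x y, F x y = true → IsProtectedEdge (fun u v => F u v = true) x y) ∧
        (∀ (i : Fin m) y, F (inl i) y = false)} ≃
    (Σ E : Ess k, (Fin m → {S : Fin k → Bool // GoodP E.1 S})) where
  toFun s :=
    ⟨⟨fun a b => s.1 (inr a) (inr b),
      proj_isDag s.1 s.2.1,
      fun a b hab => proj_protected s.1 s.2.2.2 (s.2.2.1 _ _ hab)⟩,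
     fun i => ⟨fun a => s.1 (inr a) (inl i),
      fun a ha hcon => proj_good s.1 s.2.2.2 (s.2.2.1 _ _ ha) hcon⟩⟩
  invFun s :=
    ⟨glue s.1.1 (fun i => (s.2 i).1),
     glue_isDag _ _ s.1.2.1,
     by
      rintro (i | a) y h
      · simp at h
      · cases y with
        | inl j => exact glue_protected_rl _ _ (s.2 j).2 (by simpa using h)
        | inr b => exact glue_protected_rr _ _ (s.1.2.2 a b (by simpa using h)),
     by simp⟩
  left_inv s := by
    apply Subtype.ext
    funext x y
    cases x with
    | inl i => exact (glue_inl (fun a b => s.1 (inr a) (inr b)) (fun i a => s.1 (inr a) (inl i)) i y).trans (s.2.2.2 i y).symm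
    | inr a => cases y <;> rfl
  right_inv s := rfl

instance (k : ℕ) : Finite (Ess k) := by unfold Ess; infer_instance

end MainEquiv

/-- For `1 ≤ m ≤ n`, the number of DAGs on `{1, …, n}` (as `Fin n`) in which every
edge is protected and the first `m` vertices are sinks is
`(2 ^ (n - m) - (n - m)) ^ m * essentialCount (n - m)`. -/
theorem count_essential_with_fixed_sinks (n m : ℕ) (h1 : 1 ≤ m) (h2 : m ≤ n) :
    Nat.card {E : Fin n → Fin n → Bool //
        IsDag (fun a b => E a b = true) ∧
        (∀ a b : Fin n, E a b = true → IsProtectedEdge (fun x y => E x y = true) a b) ∧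
        (∀ i : Fin n, (i : ℕ) < m → ∀ j : Fin n, ¬ (E i j = true))}
      = (2 ^ (n - m) - (n - m)) ^ m * essentialCount (n - m) := by
  classical
  obtain ⟨k, rfl⟩ : ∃ k, n = m + k := ⟨n - m, by omega⟩
  rw [Nat.add_sub_cancel_left]
  set fse := finSumFinEquiv (m := m) (n := k) with hfse
  -- conjugation equiv on matrices
  let g : (Fin (m + k) → Fin (m + k) → Bool) ≃
      ((Fin m ⊕ Fin k) → (Fin m ⊕ Fin k) → Bool) :=
    { toFun := fun E a b => E (fse a) (fse b)
      invFun := fun F x y => F (fse.symm x) (fse.symm y)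
      left_inv := fun E => by funext x y; simp
      right_inv := fun F => by funext a b; simp }
  have hiff : ∀ E : Fin (m + k) → Fin (m + k) → Bool,
      (IsDag (fun a b => E a b = true) ∧
        (∀ a b : Fin (m + k), E a b = true →
          IsProtectedEdge (fun x y => E x y = true) a b) ∧
        (∀ i : Fin (m + k), (i : ℕ) < m → ∀ j : Fin (m + k), ¬ (E i j = true))) ↔
      (IsDag (fun u v => g E u v = true) ∧
        (∀ x y, g E x y = true → IsProtectedEdge (fun u v => g E u v = true) x y) ∧
        (∀ (i : Fin m) y, g E (inl i) y = false)) := by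
    intro E
    constructor
    · rintro ⟨hd, hp, hs⟩
      refine ⟨(isDag_comp fse (fun a b => E a b = true)).mpr hd, ?_, ?_⟩
      · intro x y h
        exact (protected_comp fse (fun a b => E a b = true) x y).mpr
          (hp _ _ h)
      · intro i y
        have hlt : ((fse (inl i) : Fin (m + k)) : ℕ) < m := by
          simp [hfse, finSumFinEquiv_apply_left]
        exact Bool.eq_false_iff.mpr (hs _ hlt (fse y))
    · rintro ⟨hd, hp, hs⟩
      refine ⟨(isDag_comp fse (fun a b => E a b = true)).mp hd, ?_, ?_⟩
      · intro a b h
        have := (protected_comp fse (fun a b => E a b = true)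
          (fse.symm a) (fse.symm b)).mp
        simp only [Equiv.apply_symm_apply] at this
        apply this
        apply hp
        show E (fse (fse.symm a)) (fse (fse.symm b)) = true
        simpa using h
      · intro i hi j hE
        have hj : E (fse (fse.symm i)) (fse (fse.symm j)) = true := by simpa using hE
        rcases hx : fse.symm i with i' | a
        · rw [hx] at hj
          have hfalse : E (fse (inl i')) (fse (fse.symm j)) = false := hs i' (fse.symm j)
          rw [hfalse] at hj
          simp at hj
        · have hia : i = fse (inr a) := by rw [← hx]; simp
          rw [hia] at hi
          simp only [hfse, finSumFinEquiv_apply_right, Fin.coe_natAdd] at hi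
          omega
  have eqv := (Equiv.subtypeEquiv g hiff).trans (sumEquiv m k)
  rw [Nat.card_congr eqv]
  -- now compute the cardinality of the sigma type
  letI : Fintype (Ess k) := Fintype.ofFinite _
  letI : ∀ E : Ess k, Fintype {S : Fin k → Bool // GoodP E.1 S} :=
    fun E => Fintype.ofFinite _
  have hfib : ∀ E : Ess k,
      Nat.card (Fin m → {S : Fin k → Bool // GoodP E.1 S}) = (2 ^ k - k) ^ m := by
    intro E
    rw [Nat.card_fun, card_good E.1 E.2.1, Nat.card_eq_fintype_card, Fintype.card_fin]
  rw [Nat.card_eq_fintype_card, Fintype.card_sigma]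
  have : ∀ E : Ess k, Fintype.card (Fin m → {S : Fin k → Bool // GoodP E.1 S})
      = (2 ^ k - k) ^ m := by
    intro E
    rw [← Nat.card_eq_fintype_card, hfib E]
  simp only [this]
  rw [Finset.sum_const, Finset.card_univ, smul_eq_mul]
  have hANE : essentialCount k = Fintype.card (Ess k) := by
    have h0 : essentialCount k = Nat.card (Ess k) := rfl
    rw [h0, Nat.card_eq_fintype_card]
  rw [hANE, mul_comm]
end

section
/- Let D be a DAG on a finite vertex set V in which every edge is protected, let S be a finite set disjoint from V, and let (P_s)_{s∈S} be a family of subsets of V. Let D' be the graph on V ∪ S obtained from D by adding, for each s ∈ S, an edge v→s for every v ∈ P_s, and no other edges. Then D' is a DAG in which every vertex of S is a sink, and every edge of D' is protected if and only if for every s ∈ S and every v ∈ V one has P_s ≠ {v} ∪ pa(v) (where pa is taken in D). Moreover, every DAG on V ∪ S in which every edge is protected, every vertex of S is a sink, and whose induced subgraph on V equals D arises in this way from a unique such family (P_s)_{s∈S}. -/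
/-!
Adding the vertices of `S` as sinks keeps `D'` inside the lexicographic sum of `D` with the empty
relation on `S`, so `D'` is acyclic. The parents of an old vertex are unchanged and the parents of
`s` are `P s`, so the edges of `D` stay protected, while `v → s` is unprotected exactly when
`P s = {v} ∪ pa v` (note `v ∉ pa v`). Conversely, a graph on `V ⊕ S` with sinks `S` inducing `D` is
the extension of `D` by its own sets of sink parents, and the extension determines the family.
-/

open Function Relation

section

variable {V S : Type*}

lemma IsDag.mono {E F : V → V → Prop} (hE : IsDag E) (hFE : F ≤ E) : IsDag F :=
  ⟨fun a h => hE.1 a (hFE a a h), fun a h => hE.2 a (TransGen.mono hFE a a h)⟩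

lemma isDag_bot : IsDag (⊥ : V → V → Prop) :=
  ⟨fun _ h => h, fun a h => by obtain ⟨_, h, -⟩ := TransGen.head'_iff.1 h; exact h⟩

lemma IsDag.sumLex {r : V → V → Prop} {s : S → S → Prop} (hr : IsDag r) (hs : IsDag s) :
    IsDag (Sum.Lex r s) := by
  have hlex : TransGen (Sum.Lex r s) ≤ Sum.Lex (TransGen r) (TransGen s) := by
    rw [← transGen_eq_self (r := Sum.Lex (TransGen r) (TransGen s))]
    exact TransGen.mono fun _ _ => Sum.Lex.mono (fun _ _ => .single) (fun _ _ => .single)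
  have hacyc : ∀ x, ¬ TransGen (Sum.Lex r s) x x := by
    rintro (v | t) h
    · exact hr.2 v (Sum.lex_inl_inl.1 (hlex _ _ h))
    · exact hs.2 t (Sum.lex_inr_inr.1 (hlex _ _ h))
  exact ⟨fun x h => hacyc x (.single h), hacyc⟩

lemma Set.image_sdiff_singleton_eq_image_iff {α β : Type*} {f : α → β} (hf : Injective f)
    {A B : Set α} {a : α} : f '' A \ {f a} = f '' B ↔ A \ {a} = B := by
  rw [← Set.image_singleton, ← Set.image_sdiff hf, hf.image_injective.eq_iff]

lemma Set.sdiff_singleton_eq_iff_eq_insert_s12 {α : Type*} {A B : Set α} {a : α} (haA : a ∈ A)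
    (haB : a ∉ B) : A \ {a} = B ↔ A = insert a B := by
  constructor
  · rintro rfl
    rw [Set.insert_sdiff_singleton, Set.insert_eq_of_mem haA]
  · rintro rfl
    exact Set.insert_sdiff_self_of_notMem haB

def sinkExtension (E : V → V → Prop) (P : S → Set V) : V ⊕ S → V ⊕ S → Prop
  | .inl v, .inl w => E v w
  | .inl v, .inr s => v ∈ P s
  | .inr _, _ => False

section sinkExtension

variable {E : V → V → Prop} {P : S → Set V}

lemma sinkExtension_iff {x y : V ⊕ S} : sinkExtension E P x y ↔
    (∃ v w : V, x = .inl v ∧ y = .inl w ∧ E v w) ∨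
      (∃ (v : V) (s : S), x = .inl v ∧ y = .inr s ∧ v ∈ P s) := by
  cases x <;> cases y <;> simp [sinkExtension]

lemma eq_sinkExtension_iff {F : V ⊕ S → V ⊕ S → Prop} : F = sinkExtension E P ↔
    (∀ v w : V, F (.inl v) (.inl w) ↔ E v w) ∧ (∀ (v : V) (s : S), F (.inl v) (.inr s) ↔ v ∈ P s) ∧
      ∀ (s : S) (y : V ⊕ S), ¬ F (.inr s) y := by
  constructor
  · rintro rfl
    exact ⟨fun _ _ => .rfl, fun _ _ => .rfl, fun _ _ h => h⟩
  · rintro ⟨hinl, hinr, hsink⟩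
    funext x y
    cases x <;> cases y <;> simp [sinkExtension, *]

lemma sinkExtension_injective (E : V → V → Prop) : Injective (sinkExtension (S := S) E) :=
  fun _ _ h => funext fun s => Set.ext fun v => (congrFun₂ h (.inl v) (.inr s)).to_iff

lemma sinkExtension_le_sumLex : sinkExtension E P ≤ Sum.Lex E ⊥ := by
  rintro (v | s) (w | t) h
  exacts [Sum.Lex.inl h, Sum.Lex.sep v t, h.elim, h.elim]

lemma IsDag.sinkExtension (hE : IsDag E) : IsDag (sinkExtension E P) :=
  (hE.sumLex isDag_bot).mono sinkExtension_le_sumLex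

lemma pa_sinkExtension_inl (w : V) :
    pa (sinkExtension E P) (.inl w) = Sum.inl '' pa E w := by
  ext (v | s) <;> simp [pa, sinkExtension]

lemma pa_sinkExtension_inr (s : S) :
    pa (sinkExtension E P) (.inr s) = Sum.inl '' P s := by
  ext (v | t) <;> simp [pa, sinkExtension]

lemma isProtectedEdge_sinkExtension_inl_inl {v w : V} :
    IsProtectedEdge (sinkExtension E P) (.inl v) (.inl w) ↔ IsProtectedEdge E v w := by
  rw [IsProtectedEdge, IsProtectedEdge, pa_sinkExtension_inl, pa_sinkExtension_inl,
    Ne, Set.image_sdiff_singleton_eq_image_iff Sum.inl_injective]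

lemma isProtectedEdge_sinkExtension_inl_inr {v : V} {s : S} (hv : ¬ E v v) (hvs : v ∈ P s) :
    IsProtectedEdge (sinkExtension E P) (.inl v) (.inr s) ↔ P s ≠ insert v (pa E v) := by
  rw [IsProtectedEdge, pa_sinkExtension_inr, pa_sinkExtension_inl, Ne,
    Set.image_sdiff_singleton_eq_image_iff Sum.inl_injective,
    Set.sdiff_singleton_eq_iff_eq_insert_s12 (B := pa E v) hvs hv]

lemma forall_isProtectedEdge_sinkExtension_iff (hE : ∀ v, ¬ E v v) :
    (∀ a b, sinkExtension E P a b → IsProtectedEdge (sinkExtension E P) a b) ↔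
      (∀ v w, E v w → IsProtectedEdge E v w) ∧ ∀ (s : S) (v : V), P s ≠ insert v (pa E v) := by
  constructor
  · intro h
    refine ⟨fun v w hvw => isProtectedEdge_sinkExtension_inl_inl.1 (h _ _ hvw), fun s v hPs => ?_⟩
    have hvs : v ∈ P s := hPs ▸ Set.mem_insert v _
    exact (isProtectedEdge_sinkExtension_inl_inr (hE v) hvs).1 (h _ _ hvs) hPs
  · rintro ⟨hprot, hP⟩ (v | s) (w | t) h
    · exact isProtectedEdge_sinkExtension_inl_inl.2 (hprot v w h)
    · exact (isProtectedEdge_sinkExtension_inl_inr (hE v) h).2 (hP t v)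
    all_goals exact h.elim

end sinkExtension

end

theorem extend_by_sinks_general {V S : Type*}
    (E : V → V → Prop) (hE : IsDag E)
    (hp : ∀ a b, E a b → IsProtectedEdge E a b)
    (P : S → Set V)
    (E' : V ⊕ S → V ⊕ S → Prop)
    (h1 : ∀ v w : V, E' (Sum.inl v) (Sum.inl w) ↔ E v w)
    (h2 : ∀ (v : V) (s : S), E' (Sum.inl v) (Sum.inr s) ↔ v ∈ P s)
    (h3 : ∀ (s : S) (y : V ⊕ S), ¬ E' (Sum.inr s) y) :
    (IsDag E' ∧ ∀ (s : S) (y : V ⊕ S), ¬ E' (Sum.inr s) y) ∧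
      ((∀ a b, E' a b → IsProtectedEdge E' a b) ↔
        ∀ (s : S) (v : V), P s ≠ insert v (pa E v)) ∧
      (∀ F : V ⊕ S → V ⊕ S → Prop, IsDag F →
        (∀ a b, F a b → IsProtectedEdge F a b) →
        (∀ (s : S) (y : V ⊕ S), ¬ F (Sum.inr s) y) →
        (∀ v w : V, F (Sum.inl v) (Sum.inl w) ↔ E v w) →
        ∃! Q : S → Set V,
          (∀ (s : S) (v : V), Q s ≠ insert v (pa E v)) ∧
          ∀ x y : V ⊕ S, F x y ↔
            ((∃ v w : V, x = Sum.inl v ∧ y = Sum.inl w ∧ E v w) ∨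
              (∃ (v : V) (s : S), x = Sum.inl v ∧ y = Sum.inr s ∧ v ∈ Q s))) := by
  obtain rfl : E' = sinkExtension E P := eq_sinkExtension_iff.2 ⟨h1, h2, h3⟩
  refine ⟨⟨hE.sinkExtension, h3⟩,
    (forall_isProtectedEdge_sinkExtension_iff hE.1).trans (and_iff_right hp), ?_⟩
  intro F _ hpF hsink h1F
  have hF : F = sinkExtension E fun s => {v | F (.inl v) (.inr s)} :=
    eq_sinkExtension_iff.2 ⟨h1F, fun _ _ => .rfl, hsink⟩
  rw [hF] at hpF
  refine ⟨_, ⟨((forall_isProtectedEdge_sinkExtension_iff hE.1).1 hpF).2,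
    fun x y => (congrFun₂ hF x y).to_iff.trans sinkExtension_iff⟩, ?_⟩
  rintro Q ⟨-, hQ⟩
  refine sinkExtension_injective E (hF ▸ ?_)
  exact funext₂ fun x y => propext (sinkExtension_iff.trans (hQ x y).symm)

/-- Let `D` (relation `E` on `V`) be a DAG all of whose edges are protected, `S` a
finite set disjoint from `V` (modelled via the sum type `V ⊕ S`), and `(P s)_{s ∈ S}`
a family of subsets of `V`.  The graph `E'` on `V ⊕ S` obtained by adding an edge
`v → s` for each `s ∈ S` and `v ∈ P s` (and no other edges) is a DAG in which every
vertex of `S` is a sink; all its edges are protected iff `P s ≠ {v} ∪ pa(v)` for all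
`s ∈ S`, `v ∈ V`.  Moreover every all-edges-protected DAG on `V ⊕ S` in which every
vertex of `S` is a sink and whose induced subgraph on `V` is `D` arises this way
from a unique such family. -/
theorem extend_by_sinks {V S : Type*} [Fintype V] [Fintype S]
    (E : V → V → Prop) (hE : IsDag E)
    (hp : ∀ a b, E a b → IsProtectedEdge E a b)
    (P : S → Set V)
    (E' : V ⊕ S → V ⊕ S → Prop)
    (h1 : ∀ v w : V, E' (Sum.inl v) (Sum.inl w) ↔ E v w)
    (h2 : ∀ (v : V) (s : S), E' (Sum.inl v) (Sum.inr s) ↔ v ∈ P s)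
    (h3 : ∀ (s : S) (y : V ⊕ S), ¬ E' (Sum.inr s) y) :
    (IsDag E' ∧ ∀ (s : S) (y : V ⊕ S), ¬ E' (Sum.inr s) y) ∧
      ((∀ a b, E' a b → IsProtectedEdge E' a b) ↔
        ∀ (s : S) (v : V), P s ≠ insert v (pa E v)) ∧
      (∀ F : V ⊕ S → V ⊕ S → Prop, IsDag F →
        (∀ a b, F a b → IsProtectedEdge F a b) →
        (∀ (s : S) (y : V ⊕ S), ¬ F (Sum.inr s) y) →
        (∀ v w : V, F (Sum.inl v) (Sum.inl w) ↔ E v w) →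
        ∃! Q : S → Set V,
          (∀ (s : S) (v : V), Q s ≠ insert v (pa E v)) ∧
          ∀ x y : V ⊕ S, F x y ↔
            ((∃ v w : V, x = Sum.inl v ∧ y = Sum.inl w ∧ E v w) ∨
              (∃ (v : V) (s : S), x = Sum.inl v ∧ y = Sum.inr s ∧ v ∈ Q s))) :=
  extend_by_sinks_general E hE hp P E' h1 h2 h3
end
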